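/- Let H be a separable complex Hilbert space and let A be a C*-subalgebra of B(H) containing the identity operator. Then there exists a countable subset Q of the closed unit ball of A with the following property: for all vectors ξ, θ ∈ H, if ⟨ξ, a θ⟩ = 0 for every operator a belonging to the smallest norm-closed star-subalgebra of B(H) that contains Q and the identity operator, then ⟨ξ, B θ⟩ = 0 for every operator B in the closure of A with respect to the strong operator topology. -/

import Mathlib

/-! Fix a dense sequence `u` in `H`. The map `a ↦ (a (u n))ₙ` sends the unit ball of `A` into
the second countable space `ℕ → H`, so a countable `Q` inside the ball has dense image there.
On norm-bounded operators, agreement at the `u n` controls agreement everywhere, so every `a θ`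
with `a` in the ball lies in the closure of `{q θ | q ∈ Q}`: `ω_{ξ,θ}` vanishes on the ball,
hence on `A` by scaling, hence on the strong closure of `A` since `ω_{ξ,θ}` is strongly
continuous. -/

open Set

theorem exists_countable_subset_image_subset_closure_image {α X : Type*} [TopologicalSpace X]
    [SecondCountableTopology X] (f : α → X) (s : Set α) :
    ∃ t ⊆ s, t.Countable ∧ f '' s ⊆ closure (f '' t) := by
  obtain ⟨t', ht'c, ht'd⟩ := TopologicalSpace.exists_countable_dense (f '' s)
  choose g hgs hfg using fun y : f '' s => y.2
  refine ⟨g '' t', image_subset_iff.2 fun y _ => hgs y, ht'c.image g, ?_⟩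
  rw [image_image, show (fun y => f (g y)) = Subtype.val from funext hfg]
  exact Subtype.dense_iff.1 ht'd

theorem LinearMap.eq_zero_of_forall_norm_le_one {𝕜 V M : Type*} [RCLike 𝕜] [NormedAddCommGroup V]
    [NormedSpace 𝕜 V] [AddCommGroup M] [Module 𝕜 M] [NoZeroSMulDivisors 𝕜 M] {p : Submodule 𝕜 V}
    {f : V →ₗ[𝕜] M} (hf : ∀ v ∈ p, ‖v‖ ≤ 1 → f v = 0) {v : V} (hv : v ∈ p) : f v = 0 := by
  rcases eq_or_ne v 0 with rfl | hv0
  · exact f.map_zero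
  have hunit := hf _ (p.smul_mem (‖v‖⁻¹ : 𝕜) hv) (norm_smul_inv_norm hv0).le
  rw [f.map_smul, smul_eq_zero] at hunit
  exact hunit.resolve_left (by simpa using hv0)

namespace ContinuousLinearMap

variable {𝕜 E F : Type*} [NontriviallyNormedField 𝕜] [SeminormedAddCommGroup E] [NormedSpace 𝕜 E]
  [SeminormedAddCommGroup F] [NormedSpace 𝕜 F]

theorem norm_apply_sub_apply_le (a b : E →L[𝕜] F) (x y : E) :
    ‖a x - b x‖ ≤ (‖a‖ + ‖b‖) * ‖x - y‖ + ‖a y - b y‖ := by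
  have hsplit : a x - b x = (a (x - y) - b (x - y)) + (a y - b y) := by
    simp only [map_sub]; abel
  calc ‖a x - b x‖ ≤ (‖a (x - y)‖ + ‖b (x - y)‖) + ‖a y - b y‖ := by
        rw [hsplit]; exact (norm_add_le _ _).trans (by gcongr; exact norm_sub_le _ _)
    _ ≤ (‖a‖ * ‖x - y‖ + ‖b‖ * ‖x - y‖) + ‖a y - b y‖ := by
        gcongr <;> exact le_opNorm _ _
    _ = (‖a‖ + ‖b‖) * ‖x - y‖ + ‖a y - b y‖ := by ring

/-- On a norm-bounded family of operators, pointwise approximation on a dense range gives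
pointwise approximation everywhere. -/
theorem apply_mem_closure_image_of_denseRange {ι : Type*} {u : ι → E} (hu : DenseRange u)
    {Q : Set (E →L[𝕜] F)} {C : ℝ} (hQ : ∀ q ∈ Q, ‖q‖ ≤ C) {a : E →L[𝕜] F} (ha : ‖a‖ ≤ C)
    (h : (fun i => a (u i)) ∈ closure ((fun q i => q (u i)) '' Q)) (x : E) :
    a x ∈ closure ((fun q => q x) '' Q) := by
  rw [Metric.mem_closure_iff]
  intro ε hε
  have hC : 0 ≤ C := (norm_nonneg a).trans ha
  set δ := ε / (2 * C + 2) with hδ_def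
  have hδ : 0 < δ := by positivity
  obtain ⟨i, hi⟩ := Metric.denseRange_iff.1 hu x δ hδ
  obtain ⟨_, hqi, q, hqQ, rfl⟩ := mem_closure_iff.1 h {g | dist (a (u i)) (g i) < δ}
    (isOpen_lt (by fun_prop) continuous_const) (by simpa using hδ)
  refine ⟨q x, mem_image_of_mem _ hqQ, ?_⟩
  simp only [mem_ofPred_eq, dist_eq_norm] at hi hqi ⊢
  calc ‖a x - q x‖ ≤ (‖a‖ + ‖q‖) * ‖x - u i‖ + ‖a (u i) - q (u i)‖ :=
        norm_apply_sub_apply_le a q x (u i)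
    _ ≤ (C + C) * δ + δ := by
        gcongr
        exact hQ q hqQ
    _ < ε := by
        rw [hδ_def]; field_simp; linarith

end ContinuousLinearMap

theorem inner_eq_zero_of_mem_closure {𝕜 H : Type*} [RCLike 𝕜] [NormedAddCommGroup H]
    [InnerProductSpace 𝕜 H] {ξ : H} {s : Set H} (hs : ∀ y ∈ s, inner 𝕜 ξ y = 0) {y : H}
    (hy : y ∈ closure s) : inner 𝕜 ξ y = 0 :=
  closure_minimal hs (isClosed_eq (continuous_const.inner continuous_id) continuous_const) hy

theorem vector_functional_annihilation_general
    {H : Type*} [NormedAddCommGroup H] [InnerProductSpace ℂ H] [CompleteSpace H]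
    [TopologicalSpace.SeparableSpace H]
    (A : StarSubalgebra ℂ (H →L[ℂ] H)) :
    ∃ Q : Set (H →L[ℂ] H),
      Q.Countable ∧
      Q ⊆ {a : H →L[ℂ] H | a ∈ A ∧ ‖a‖ ≤ 1} ∧
      ∀ ξ θ : H,
        (∀ a ∈ (StarAlgebra.adjoin ℂ Q).topologicalClosure,
          (inner ℂ ξ (a θ) : ℂ) = 0) →
        ∀ B : H →L[ℂ] H,
          (∀ ε > (0 : ℝ), ∀ (n : ℕ) (x : Fin n → H),
            ∃ a ∈ A, ∀ i : Fin n, ‖(B - a) (x i)‖ < ε) →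
          (inner ℂ ξ (B θ) : ℂ) = 0 := by
  obtain ⟨u, hu⟩ := TopologicalSpace.exists_dense_seq H
  obtain ⟨Q, hQS, hQc, hQdense⟩ := exists_countable_subset_image_subset_closure_image
    (fun (a : H →L[ℂ] H) n => a (u n)) {a | a ∈ A ∧ ‖a‖ ≤ 1}
  refine ⟨Q, hQc, hQS, fun ξ θ hann B hB => ?_⟩
  have hQ : ∀ y ∈ (fun q : H →L[ℂ] H => q θ) '' Q, inner ℂ ξ y = 0 := by
    rintro _ ⟨q, hq, rfl⟩
    exact hann q <| StarSubalgebra.le_topologicalClosure _ <| StarAlgebra.subset_adjoin ℂ Q hq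
  have hball : ∀ a ∈ A, ‖a‖ ≤ 1 → inner ℂ ξ (a θ) = 0 := fun a ha ha1 =>
    inner_eq_zero_of_mem_closure hQ <| ContinuousLinearMap.apply_mem_closure_image_of_denseRange
      hu (fun q hq => (hQS hq).2) ha1 (hQdense ⟨a, ⟨ha, ha1⟩, rfl⟩) θ
  have hAθ : ∀ a ∈ A, inner ℂ ξ (a θ) = 0 := fun a ha =>
    LinearMap.eq_zero_of_forall_norm_le_one (p := A.toSubalgebra.toSubmodule)
      (f := ((innerSL ℂ ξ).comp (ContinuousLinearMap.apply ℂ H θ)).toLinearMap) hball ha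
  refine inner_eq_zero_of_mem_closure (s := (fun a : H →L[ℂ] H => a θ) '' A)
    (by rintro _ ⟨a, ha, rfl⟩; exact hAθ a ha) (Metric.mem_closure_iff.2 fun ε hε => ?_)
  obtain ⟨a, ha, hBa⟩ := hB ε hε 1 fun _ => θ
  exact ⟨a θ, mem_image_of_mem _ ha, by simpa [dist_eq_norm] using hBa 0⟩

/-- Key intermediate claim of the Appendix Lemma: there is a countable subset Q of the
closed unit ball of A such that any vector functional ω_{ξ,θ} annihilating the smallest
norm-closed unital *-subalgebra generated by Q annihilates the strong-operator closure
of A as well. -/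
theorem vector_functional_annihilation
    {H : Type*} [NormedAddCommGroup H] [InnerProductSpace ℂ H] [CompleteSpace H]
    [TopologicalSpace.SeparableSpace H]
    (A : StarSubalgebra ℂ (H →L[ℂ] H)) (hA : IsClosed (A : Set (H →L[ℂ] H))) :
    ∃ Q : Set (H →L[ℂ] H),
      Q.Countable ∧
      Q ⊆ {a : H →L[ℂ] H | a ∈ A ∧ ‖a‖ ≤ 1} ∧
      ∀ ξ θ : H,
        (∀ a ∈ (StarAlgebra.adjoin ℂ Q).topologicalClosure,
          (inner ℂ ξ (a θ) : ℂ) = 0) →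
        ∀ B : H →L[ℂ] H,
          (∀ ε > (0 : ℝ), ∀ (n : ℕ) (x : Fin n → H),
            ∃ a ∈ A, ∀ i : Fin n, ‖(B - a) (x i)‖ < ε) →
          (inner ℂ ξ (B θ) : ℂ) = 0 :=
  vector_functional_annihilation_general A
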